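/- Let S ∈ V be nonzero with H₀(S,S) = 0. Then: ker K_S is 3-dimensional and totally isotropic for H₀; im K_S is 4-dimensional; ℝ·S ⊆ ker K_S ⊆ im K_S ⊆ {x ∈ V : H₀(S,x) = 0}; and im K_S = {x ∈ V : H₀(x, y) = 0 for all y ∈ ker K_S}, i.e., im K_S = (ker K_S)^⊥ with respect to H₀. -/

import Mathlib

noncomputable section

noncomputable section

/-- `V = ℝ⁷` with its standard basis. -/
abbrev V7 : Type := Fin 7 → ℝ

/-- Evaluation of the basis 3-form `eⁱ ∧ eʲ ∧ eᵏ` on `(x, y, z)`: the determinant of the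
3×3 matrix of the corresponding coordinates. -/
def tripleDet (i j k : Fin 7) (x y z : V7) : ℝ :=
  x i * (y j * z k - y k * z j) - x j * (y i * z k - y k * z i) + x k * (y i * z j - y j * z i)

/-- The split-generic 3-form `Φ₀ = −e¹∧e⁴∧e⁷ + √2·e¹∧e⁵∧e⁶ + √2·e²∧e³∧e⁷ + e²∧e⁴∧e⁵ + e³∧e⁴∧e⁶`
(indices here are 0-indexed). -/
def Phi0 (x y z : V7) : ℝ :=
  -(tripleDet 0 3 6 x y z) + Real.sqrt 2 * tripleDet 0 4 5 x y z
    + Real.sqrt 2 * tripleDet 1 2 6 x y z + tripleDet 1 3 4 x y z + tripleDet 2 3 5 x y z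

/-- The symmetric bilinear form `H₀` of signature (3,4):
`H₀(E₁,E₇) = H₀(E₂,E₅) = H₀(E₃,E₆) = 1`, `H₀(E₄,E₄) = −1` (1-indexed). -/
def H0 (x y : V7) : ℝ :=
  x 0 * y 6 + x 6 * y 0 + x 1 * y 4 + x 4 * y 1 + x 2 * y 5 + x 5 * y 2 - x 3 * y 3

/-! The whole argument rests on the identity `a × (a × c) = H₀(a,c) a − H₀(a,a) c` for the
cross product, together with the skewness `H₀(K x, y) = −H₀(x, K y)`.

For isotropic `S` the identity gives `K² x = H₀(S,x) S`, so `K` maps the 6-dimensional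
hyperplane `S^⊥` onto a totally isotropic subspace. Such a subspace has dimension `≤ 3`
because `H₀` is nondegenerate on `ℝ⁷`, hence `dim ker K ≥ 3`. For `x ∈ ker K`, `K² x = 0` forces
`H₀(S,x) = 0`, and then the identity with `a = x`, `c = S` forces `H₀(x,x) = 0`; by polarization
`ker K` is totally isotropic, so `dim ker K = 3`. Skewness gives `im K ⊆ (ker K)^⊥`, with
equality by counting dimensions, and the remaining inclusions follow. -/

open Module

namespace LinearMap.BilinForm

variable {𝕜 V : Type*} [Field 𝕜] [AddCommGroup V] [Module 𝕜 V] {B : LinearMap.BilinForm 𝕜 V}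

lemma IsSymm.apply_eq_zero_of_apply_self_eq_zero [NeZero (2 : 𝕜)] (hB : B.IsSymm)
    {U : Submodule 𝕜 V} (hU : ∀ x ∈ U, B x x = 0) {x y : V} (hx : x ∈ U) (hy : y ∈ U) :
    B x y = 0 := by
  rw [hB.polarization, hU x hx, hU y hy, hU _ (U.add_mem hx hy), sub_zero, sub_zero, zero_div]

variable [FiniteDimensional 𝕜 V]

lemma two_mul_finrank_le_of_isotropic (hB : B.Nondegenerate) {U : Submodule 𝕜 V}
    (hU : ∀ x ∈ U, ∀ y ∈ U, B x y = 0) : 2 * finrank 𝕜 U ≤ finrank 𝕜 V := by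
  have h := Submodule.finrank_mono (show U ≤ B.orthogonal U from fun x hx y hy ↦ hU y hy x hx)
  rw [finrank_orthogonal hB] at h
  have := Submodule.finrank_le U
  omega

lemma range_eq_orthogonal_ker_of_skew (hB : B.Nondegenerate) {T : V →ₗ[𝕜] V}
    (hT : ∀ x y, B (T x) y = -B x (T y)) : range T = B.orthogonal (ker T) := by
  refine Submodule.eq_of_le_of_finrank_le ?_ ?_
  · rintro _ ⟨x, rfl⟩ y (hy : T y = 0)
    rw [← neg_eq_zero, ← hT, hy, map_zero, LinearMap.zero_apply]
  · rw [finrank_orthogonal hB, ← finrank_range_add_finrank_ker T, Nat.add_sub_cancel]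

end LinearMap.BilinForm

lemma LinearMap.finrank_le_finrank_map_add_finrank_ker {𝕜 V W : Type*} [Field 𝕜]
    [AddCommGroup V] [Module 𝕜 V] [AddCommGroup W] [Module 𝕜 W] [FiniteDimensional 𝕜 V]
    (T : V →ₗ[𝕜] W) (U : Submodule 𝕜 V) :
    finrank 𝕜 U ≤ finrank 𝕜 (U.map T) + finrank 𝕜 (ker T) := by
  have h := finrank_range_add_finrank_ker (T.domRestrict U)
  have hker : (ker (T.domRestrict U)).map U.subtype ≤ ker T := by
    rintro _ ⟨x, hx, rfl⟩
    exact hx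
  rw [range_domRestrict, ← Submodule.finrank_map_subtype_eq U] at h
  have := Submodule.finrank_mono hker
  omega

open LinearMap (BilinForm ker range)

def H0Form : BilinForm ℝ V7 :=
  LinearMap.mk₂ ℝ H0 (fun _ _ _ ↦ by simp only [H0, Pi.add_apply]; ring)
    (fun _ _ _ ↦ by simp only [H0, Pi.smul_apply, smul_eq_mul]; ring)
    (fun _ _ _ ↦ by simp only [H0, Pi.add_apply]; ring)
    (fun _ _ _ ↦ by simp only [H0, Pi.smul_apply, smul_eq_mul]; ring)

@[simp]
lemma H0Form_apply (x y : V7) : H0Form x y = H0 x y := rfl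

lemma H0_comm (x y : V7) : H0 x y = H0 y x := by
  simp only [H0]; ring

lemma H0Form_isSymm : H0Form.IsSymm :=
  ⟨fun x y ↦ H0_comm x y⟩

lemma eq_zero_of_H0_eq_zero {x : V7} (h : ∀ y, H0 x y = 0) : x = 0 := by
  funext i
  fin_cases i
  · simpa [H0] using h (Pi.single 6 1)
  · simpa [H0] using h (Pi.single 4 1)
  · simpa [H0] using h (Pi.single 5 1)
  · simpa [H0] using h (Pi.single 3 1)
  · simpa [H0] using h (Pi.single 1 1)
  · simpa [H0] using h (Pi.single 2 1)
  · simpa [H0] using h (Pi.single 0 1)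

lemma H0Form_nondegenerate : H0Form.Nondegenerate :=
  H0Form_isSymm.isRefl.nondegenerate_iff_separatingLeft.mpr fun _ hx ↦ eq_zero_of_H0_eq_zero hx

lemma eq_of_H0_eq {x x' : V7} (h : ∀ y, H0 x y = H0 x' y) : x = x' :=
  sub_eq_zero.mp <| eq_zero_of_H0_eq_zero fun y ↦ by
    rw [← H0Form_apply, map_sub, LinearMap.sub_apply, H0Form_apply, H0Form_apply, h, sub_self]

lemma Phi0_swap (a b c : V7) : Phi0 b a c = -Phi0 a b c := by
  simp only [Phi0, tripleDet]; ring

lemma Phi0_swap_right (a b c : V7) : Phi0 a c b = -Phi0 a b c := by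
  simp only [Phi0, tripleDet]; ring

lemma Phi0_self (a c : V7) : Phi0 a a c = 0 := by
  simp only [Phi0, tripleDet]; ring

def cross (a b : V7) : V7 :=
  ![a 3 * b 0 - a 0 * b 3 + √2 * (a 1 * b 2 - a 2 * b 1),
    a 1 * b 3 - a 3 * b 1 + √2 * (a 5 * b 0 - a 0 * b 5),
    a 2 * b 3 - a 3 * b 2 + √2 * (a 0 * b 4 - a 4 * b 0),
    a 6 * b 0 - a 0 * b 6 + a 1 * b 4 - a 4 * b 1 + a 2 * b 5 - a 5 * b 2,
    a 3 * b 4 - a 4 * b 3 + √2 * (a 2 * b 6 - a 6 * b 2),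
    a 3 * b 5 - a 5 * b 3 + √2 * (a 6 * b 1 - a 1 * b 6),
    a 6 * b 3 - a 3 * b 6 + √2 * (a 4 * b 5 - a 5 * b 4)]

lemma H0_cross (a b c : V7) : H0 (cross a b) c = Phi0 a b c := by
  simp only [H0, cross, Phi0, tripleDet, Fin.isValue, Matrix.cons_val_zero, Matrix.cons_val,
    Matrix.cons_val_one]
  ring

lemma cross_swap (a b : V7) : cross b a = -cross a b :=
  eq_of_H0_eq fun c ↦ by
    rw [H0_cross, Phi0_swap, ← H0_cross, ← H0Form_apply, ← H0Form_apply, map_neg,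
      LinearMap.neg_apply]

lemma cross_zero (a : V7) : cross a 0 = 0 := by
  funext i
  fin_cases i <;> simp [cross]

lemma cross_cross_self (a c : V7) : cross a (cross a c) = H0 a c • a - H0 a a • c := by
  have h2 : √2 ^ 2 = 2 := Real.sq_sqrt zero_le_two
  funext i
  fin_cases i <;>
    simp only [cross, H0, Fin.isValue, Fin.zero_eta, Fin.mk_one, Fin.reduceFinMk,
      Matrix.cons_val_zero, Matrix.cons_val_one, Matrix.cons_val, Pi.sub_apply, Pi.smul_apply,
      smul_eq_mul] <;>
    ring_nf <;> simp only [h2] <;> ring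

def IsCrossMap (S : V7) (K : V7 →ₗ[ℝ] V7) : Prop :=
  ∀ x y, H0 (K x) y = Phi0 S x y

namespace IsCrossMap

variable {S : V7} {K : V7 →ₗ[ℝ] V7}

lemma apply_eq_cross (hK : IsCrossMap S K) (x : V7) : K x = cross S x :=
  eq_of_H0_eq fun y ↦ by rw [hK, H0_cross]

lemma H0_apply_left (hK : IsCrossMap S K) (x y : V7) : H0 (K x) y = -H0 x (K y) := by
  rw [hK, H0_comm x, hK, Phi0_swap_right]

lemma apply_self (hK : IsCrossMap S K) : K S = 0 :=
  eq_of_H0_eq fun y ↦ by rw [hK, Phi0_self, ← H0Form_apply, map_zero, LinearMap.zero_apply]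

lemma apply_apply (hK : IsCrossMap S K) (hSiso : H0 S S = 0) (x : V7) :
    K (K x) = H0 S x • S := by
  rw [hK.apply_eq_cross, hK.apply_eq_cross, cross_cross_self, hSiso, zero_smul, sub_zero]

lemma H0_left_eq_zero_of_mem_ker (hK : IsCrossMap S K) (hSiso : H0 S S = 0) (hS0 : S ≠ 0)
    {x : V7} (hx : x ∈ ker K) : H0 S x = 0 := by
  have h := hK.apply_apply hSiso x
  rw [LinearMap.mem_ker.mp hx, map_zero, eq_comm, smul_eq_zero] at h
  exact h.resolve_right hS0

lemma H0_self_eq_zero_of_mem_ker (hK : IsCrossMap S K) (hSiso : H0 S S = 0) (hS0 : S ≠ 0)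
    {x : V7} (hx : x ∈ ker K) : H0 x x = 0 := by
  have hxS : cross x S = 0 := by
    rw [cross_swap, ← hK.apply_eq_cross, LinearMap.mem_ker.mp hx, neg_zero]
  have h := cross_cross_self x S
  rw [hxS, cross_zero, H0_comm, hK.H0_left_eq_zero_of_mem_ker hSiso hS0 hx, zero_smul, zero_sub,
    eq_comm, neg_eq_zero, smul_eq_zero] at h
  exact h.resolve_right hS0

lemma H0_eq_zero_of_mem_ker (hK : IsCrossMap S K) (hSiso : H0 S S = 0) (hS0 : S ≠ 0)
    {x y : V7} (hx : x ∈ ker K) (hy : y ∈ ker K) : H0 x y = 0 :=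
  H0Form_isSymm.apply_eq_zero_of_apply_self_eq_zero
    (fun _ hz ↦ hK.H0_self_eq_zero_of_mem_ker hSiso hS0 hz) hx hy

lemma three_le_finrank_ker (hK : IsCrossMap S K) (hSiso : H0 S S = 0) (hS0 : S ≠ 0) :
    3 ≤ finrank ℝ (ker K) := by
  set W := H0Form.orthogonal (ℝ ∙ S)
  have hW : finrank ℝ W = 6 := by
    rw [LinearMap.BilinForm.finrank_orthogonal H0Form_nondegenerate, finrank_span_singleton hS0,
      finrank_fin_fun]
  have hKW : ∀ x ∈ W.map K, ∀ y ∈ W.map K, H0Form x y = 0 := by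
    rintro _ ⟨x, hx, rfl⟩ _ ⟨y, -, rfl⟩
    have hxS : H0 S x = 0 := hx S (Submodule.mem_span_singleton_self S)
    rw [H0Form_apply, hK.H0_apply_left, hK.apply_apply hSiso, H0_comm, ← H0Form_apply, map_smul,
      LinearMap.smul_apply, H0Form_apply, hxS, smul_zero, neg_zero]
  have := LinearMap.BilinForm.two_mul_finrank_le_of_isotropic H0Form_nondegenerate hKW
  have := K.finrank_le_finrank_map_add_finrank_ker W
  rw [finrank_fin_fun] at *
  omega

end IsCrossMap

/-- Let `S ∈ V` be nonzero and isotropic (`H₀(S,S) = 0`).  Then `ker K_S` is 3-dimensional and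
totally isotropic, `im K_S` is 4-dimensional,
`ℝ·S ⊆ ker K_S ⊆ im K_S ⊆ {x : H₀(S,x) = 0}`, and `im K_S = (ker K_S)^⊥` w.r.t. `H₀`. -/
theorem crossMap_isotropic_filtration (S : V7) (hS0 : S ≠ 0) (hSiso : H0 S S = 0)
    (K : V7 →ₗ[ℝ] V7) (hK : ∀ x y : V7, H0 (K x) y = Phi0 S x y) :
    Module.finrank ℝ (LinearMap.ker K) = 3 ∧
    (∀ x ∈ LinearMap.ker K, ∀ y ∈ LinearMap.ker K, H0 x y = 0) ∧
    Module.finrank ℝ (LinearMap.range K) = 4 ∧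
    K S = 0 ∧
    LinearMap.ker K ≤ LinearMap.range K ∧
    (∀ x ∈ LinearMap.range K, H0 S x = 0) ∧
    (∀ x : V7, x ∈ LinearMap.range K ↔ ∀ y ∈ LinearMap.ker K, H0 x y = 0) := by
  have hK : IsCrossMap S K := hK
  have hiso : ∀ x ∈ ker K, ∀ y ∈ ker K, H0 x y = 0 := fun _ hx _ hy ↦
    hK.H0_eq_zero_of_mem_ker hSiso hS0 hx hy
  have hker : finrank ℝ (ker K) = 3 := by
    have := LinearMap.BilinForm.two_mul_finrank_le_of_isotropic H0Form_nondegenerate hiso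
    have := hK.three_le_finrank_ker hSiso hS0
    rw [finrank_fin_fun] at *
    omega
  have hrange : finrank ℝ (range K) = 4 := by
    have := K.finrank_range_add_finrank_ker
    rw [finrank_fin_fun, hker] at this
    omega
  have hmem_range (x : V7) : x ∈ range K ↔ ∀ y ∈ ker K, H0 x y = 0 := by
    rw [LinearMap.BilinForm.range_eq_orthogonal_ker_of_skew H0Form_nondegenerate hK.H0_apply_left]
    simp only [LinearMap.BilinForm.mem_orthogonal_iff, H0Form_apply, H0_comm _ x]
  refine ⟨hker, hiso, hrange, hK.apply_self, fun x hx ↦ (hmem_range x).mpr (hiso x hx),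
    fun x hx ↦ ?_, hmem_range⟩
  rw [H0_comm]
  exact (hmem_range x).mp hx S hK.apply_self
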